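/- In the max-plus algebra, for any matrix M ∈ ℝmax^{n×n}: there exists a vector x ∈ ℝ^n (all entries finite) with M ⊗ x ⪯ x if and only if the precedence graph G(M) has no circuit of positive weight. -/

import Mathlib

noncomputable section

/-- Max-plus matrix–vector product `(M ⊗ x)_i = max_j (M_{ij} + x_j)`. -/
def mpVec {ι : Type*} (M : Matrix ι ι EReal) (x : ι → ℝ) : ι → EReal :=
  fun i => ⨆ j, M i j + (x j : EReal)

/-- Successive nodes of a path in the precedence graph `G(M)`. -/
def IsPath {n : ℕ} (M : Matrix (Fin n) (Fin n) EReal) (r : ℕ) (p : Fin (r + 1) → Fin n) :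
    Prop := ∀ t : Fin r, M (p t.castSucc) (p t.succ) ≠ ⊥

/-- The weight of a path in `G(M)`. -/
def pathWeight {n : ℕ} (M : Matrix (Fin n) (Fin n) EReal) (r : ℕ)
    (p : Fin (r + 1) → Fin n) : EReal := ∑ t : Fin r, M (p t.castSucc) (p t.succ)

/-- `G(M)` contains no circuit of positive weight. -/
def NoPosCircuit {n : ℕ} (M : Matrix (Fin n) (Fin n) EReal) : Prop :=
  ∀ (r : ℕ), 1 ≤ r → ∀ p : Fin (r + 1) → Fin n,
    IsPath M r p → p 0 = p (Fin.last r) → pathWeight M r p ≤ 0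

/-!
A potential gives `M i j + x j ≤ x i` on every arc, so along a circuit these inequalities add up
and the potentials cancel: the circuit has weight `≤ 0`.

Conversely, if no circuit is positive, cutting a cycle out of a walk never lowers its weight, and a
walk longer than `n` contains a cycle; hence every walk from `i` weighs at most the largest weight
`x i` of a walk from `i` of length `≤ n`. This value is finite (the empty walk has weight `0`, and
entries are `< ⊤`), and prepending an arc `i → j` to a walk from `j` shows `M i j + x j ≤ x i`.
-/

lemma arc_add_le_of_mpVec_le {ι : Type*} {M : Matrix ι ι EReal} {x : ι → ℝ} {i : ι}
    (hx : mpVec M x i ≤ x i) (j : ι) : M i j + x j ≤ x i :=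
  (le_iSup (fun j => M i j + (x j : EReal)) j).trans hx

section Potential

variable {n : ℕ} {M : Matrix (Fin n) (Fin n) EReal}

lemma pathWeight_zero (p : Fin 1 → Fin n) : pathWeight M 0 p = 0 := by
  simp [pathWeight]

lemma pathWeight_succ (r : ℕ) (p : Fin (r + 2) → Fin n) :
    pathWeight M (r + 1) p = M (p 0) (p 1) + pathWeight M r (Fin.tail p) := by
  simp only [pathWeight, Fin.sum_univ_succ, Fin.tail, Fin.succ_castSucc]
  rfl

lemma pathWeight_add_le_of_potential {x : Fin n → ℝ} (hx : ∀ i, mpVec M x i ≤ x i) :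
    ∀ (r : ℕ) (p : Fin (r + 1) → Fin n),
      pathWeight M r p + x (p (Fin.last r)) ≤ x (p 0)
  | 0, p => by simp [pathWeight_zero]
  | r + 1, p => calc
      pathWeight M (r + 1) p + x (p (Fin.last (r + 1)))
          = M (p 0) (p 1) + (pathWeight M r (Fin.tail p) + x (Fin.tail p (Fin.last r))) := by
        rw [pathWeight_succ, add_assoc]
        rfl
      _ ≤ M (p 0) (p 1) + x (p 1) := by
        gcongr
        exact pathWeight_add_le_of_potential hx r (Fin.tail p)
      _ ≤ x (p 0) := arc_add_le_of_mpVec_le (hx _) _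

lemma pathWeight_nonpos_of_potential {x : Fin n → ℝ} (hx : ∀ i, mpVec M x i ≤ x i) {r : ℕ}
    {p : Fin (r + 1) → Fin n} (hp : p 0 = p (Fin.last r)) : pathWeight M r p ≤ 0 := by
  refine (EReal.addLECancellable_coe (x (p 0))).add_le_add_iff_right.mp ?_
  simpa only [zero_add, hp] using pathWeight_add_le_of_potential hx r p

end Potential

namespace MaxPlus

variable {ι : Type*} (M : Matrix ι ι EReal)

/-- Walks are indexed by `ℕ` (only `p 0, …, p r` matter), which makes splicing them easy. -/
def IsWalk (r : ℕ) (p : ℕ → ι) : Prop :=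
  ∀ t < r, M (p t) (p (t + 1)) ≠ ⊥

def walkWeight (r : ℕ) (p : ℕ → ι) : EReal :=
  ∑ t ∈ Finset.range r, M (p t) (p (t + 1))

def ClosedWalksNonpos : Prop :=
  ∀ (r : ℕ) (p : ℕ → ι), IsWalk M (r + 1) p → p 0 = p (r + 1) → walkWeight M (r + 1) p ≤ 0

/-- `bellman M k i` is the largest weight of a walk of length at most `k` starting at `i`. -/
def bellman : ℕ → ι → EReal
  | 0 => 0
  | k + 1 => fun i => max (bellman k i) (⨆ j, M i j + bellman k j)

variable {M}

@[simp]
lemma walkWeight_zero (p : ℕ → ι) : walkWeight M 0 p = 0 := by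
  simp [walkWeight]

lemma walkWeight_succ (r : ℕ) (p : ℕ → ι) :
    walkWeight M (r + 1) p = M (p 0) (p 1) + walkWeight M r (fun t => p (t + 1)) := by
  rw [walkWeight, Finset.sum_range_succ', add_comm]
  rfl

lemma walkWeight_add (r s : ℕ) (p : ℕ → ι) :
    walkWeight M (r + s) p = walkWeight M r p + walkWeight M s (fun t => p (r + t)) :=
  Finset.sum_range_add _ r s

lemma walkWeight_congr {r : ℕ} {p q : ℕ → ι} (h : ∀ t ≤ r, p t = q t) :
    walkWeight M r p = walkWeight M r q :=
  Finset.sum_congr rfl fun t ht => by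
    have ht := Finset.mem_range.mp ht
    rw [h t ht.le, h (t + 1) ht]

lemma isWalk_succ_iff (r : ℕ) (p : ℕ → ι) :
    IsWalk M (r + 1) p ↔ M (p 0) (p 1) ≠ ⊥ ∧ IsWalk M r (fun t => p (t + 1)) := by
  refine ⟨fun h => ⟨h 0 r.succ_pos, fun t ht => h (t + 1) (by omega)⟩, ?_⟩
  rintro ⟨h0, h⟩ (_ | t) ht
  exacts [h0, h t (by omega)]

lemma isWalk_add_iff (r s : ℕ) (p : ℕ → ι) :
    IsWalk M (r + s) p ↔ IsWalk M r p ∧ IsWalk M s (fun t => p (r + t)) := by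
  refine ⟨fun h => ⟨fun t ht => h t (by omega), fun t ht => h (r + t) (by omega)⟩, ?_⟩
  rintro ⟨h₁, h₂⟩ t ht
  rcases lt_or_ge t r with htr | hrt
  · exact h₁ t htr
  · obtain ⟨u, rfl⟩ := Nat.exists_eq_add_of_le hrt
    exact h₂ u (by omega)

lemma isWalk_congr {r : ℕ} {p q : ℕ → ι} (h : ∀ t ≤ r, p t = q t) :
    IsWalk M r p ↔ IsWalk M r q := by
  refine forall₂_congr fun t ht => ?_
  rw [h t ht.le, h (t + 1) ht]

lemma exists_lt_le_card_map_eq [Fintype ι] (p : ℕ → ι) :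
    ∃ a b, a < b ∧ b ≤ Fintype.card ι ∧ p a = p b := by
  obtain ⟨a, b, hne, hab⟩ :=
    Fintype.exists_ne_map_eq_of_card_lt (fun t : Fin (Fintype.card ι + 1) => p t) (by simp)
  rcases lt_or_gt_of_ne (Fin.val_ne_of_ne hne) with h | h
  · exact ⟨a, b, h, by omega, hab⟩
  · exact ⟨b, a, h, by omega, hab.symm⟩

/-- Cutting out a cycle `p a = p (a + d + 1)`, found by pigeonhole. -/
lemma exists_shorter_walk_weight_ge [Fintype ι] (hC : ClosedWalksNonpos M) {r : ℕ} {p : ℕ → ι}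
    (hp : IsWalk M r p) (hr : Fintype.card ι < r) :
    ∃ r' < r, ∃ q : ℕ → ι, IsWalk M r' q ∧ q 0 = p 0 ∧ walkWeight M r p ≤ walkWeight M r' q := by
  obtain ⟨a, b, hab, hb, hpab⟩ := exists_lt_le_card_map_eq p
  obtain ⟨d, rfl⟩ : ∃ d, b = a + (d + 1) := ⟨b - a - 1, by omega⟩
  obtain ⟨s, rfl⟩ := Nat.exists_eq_add_of_le (hb.trans hr.le)
  let q : ℕ → ι := fun t => if t ≤ a then p t else p (t + (d + 1))
  have hq_le : ∀ t ≤ a, q t = p t := fun t ht => if_pos ht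
  have hq_shift : (fun t => q (a + t)) = fun t => p (a + (d + 1) + t) := by
    funext t
    rcases t with _ | t
    · exact (hq_le a le_rfl).trans hpab
    · simp only [q, if_neg (show ¬a + (t + 1) ≤ a by omega)]
      congr 1
      omega
  rw [isWalk_add_iff (a + (d + 1)) s, isWalk_add_iff a (d + 1)] at hp
  obtain ⟨⟨hp_pre, hp_cyc⟩, hp_suf⟩ := hp
  have hcyc : walkWeight M (d + 1) (fun t => p (a + t)) ≤ 0 := hC d _ hp_cyc hpab
  refine ⟨a + s, by omega, q, ?_, hq_le 0 a.zero_le, ?_⟩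
  · rw [isWalk_add_iff a s, isWalk_congr hq_le, hq_shift]
    exact ⟨hp_pre, hp_suf⟩
  · rw [walkWeight_add (a + (d + 1)) s, walkWeight_add a (d + 1), walkWeight_add a s,
      walkWeight_congr hq_le, hq_shift]
    gcongr
    exact add_le_of_nonpos_right hcyc

lemma bellman_succ (k : ℕ) (i : ι) :
    bellman M (k + 1) i = max (bellman M k i) (⨆ j, M i j + bellman M k j) := rfl

lemma bellman_nonneg : ∀ (k : ℕ) (i : ι), 0 ≤ bellman M k i
  | 0, _ => le_rfl
  | k + 1, i => (bellman_nonneg k i).trans (le_max_left _ _)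

lemma bellman_lt_top [Finite ι] (hM : ∀ a b, M a b ≠ ⊤) :
    ∀ (k : ℕ) (i : ι), bellman M k i < ⊤
  | 0, _ => EReal.zero_lt_top
  | k + 1, i => by
    have : Nonempty ι := ⟨i⟩
    obtain ⟨j, hj⟩ := exists_eq_ciSup_of_finite (f := fun j => M i j + bellman M k j)
    rw [bellman_succ, max_lt_iff, ← hj]
    exact ⟨bellman_lt_top hM k i, EReal.add_lt_top (hM i j) (bellman_lt_top hM k j).ne⟩

lemma walkWeight_le_bellman_of_le :
    ∀ {k r : ℕ} {p : ℕ → ι}, IsWalk M r p → r ≤ k → walkWeight M r p ≤ bellman M k (p 0)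
  | k, 0, p, _, _ => by simpa using bellman_nonneg k (p 0)
  | k + 1, r + 1, p, hp, hr => by
    rw [isWalk_succ_iff] at hp
    calc walkWeight M (r + 1) p
        ≤ M (p 0) (p 1) + bellman M k (p 1) := by
          rw [walkWeight_succ]
          gcongr
          exact walkWeight_le_bellman_of_le hp.2 (by omega)
      _ ≤ ⨆ j, M (p 0) j + bellman M k j := le_iSup (fun j => M (p 0) j + bellman M k j) _
      _ ≤ bellman M (k + 1) (p 0) := le_max_right _ _

lemma exists_walkWeight_eq_bellman [Finite ι] : ∀ (k : ℕ) (i : ι),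
    ∃ r ≤ k, ∃ p : ℕ → ι, IsWalk M r p ∧ p 0 = i ∧ bellman M k i = walkWeight M r p
  | 0, i => ⟨0, le_rfl, fun _ => i, fun _ h => absurd h (Nat.not_lt_zero _), rfl, by simp [bellman]⟩
  | k + 1, i => by
    by_cases hstay : (⨆ j, M i j + bellman M k j) ≤ bellman M k i
    · obtain ⟨r, hr, p, hp, hp0, heq⟩ := exists_walkWeight_eq_bellman k i
      exact ⟨r, by omega, p, hp, hp0, by rw [bellman_succ, max_eq_left hstay, heq]⟩
    push Not at hstay
    have : Nonempty ι := ⟨i⟩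
    obtain ⟨j, hj⟩ := exists_eq_ciSup_of_finite (f := fun j => M i j + bellman M k j)
    have hval : bellman M (k + 1) i = M i j + bellman M k j := by
      rw [bellman_succ, max_eq_right hstay.le, hj]
    have hij : M i j ≠ ⊥ := fun hbot => by
      rw [← hj, hbot, EReal.bot_add] at hstay
      exact not_lt_bot hstay
    obtain ⟨r, hr, p, hp, rfl, heq⟩ := exists_walkWeight_eq_bellman k j
    let q : ℕ → ι := fun | 0 => i | t + 1 => p t
    refine ⟨r + 1, by omega, q, (isWalk_succ_iff r q).mpr ⟨hij, hp⟩, rfl, ?_⟩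
    rw [hval, heq, walkWeight_succ]

lemma walkWeight_le_bellman [Fintype ι] (hC : ClosedWalksNonpos M) {r : ℕ} {p : ℕ → ι}
    (hp : IsWalk M r p) : walkWeight M r p ≤ bellman M (Fintype.card ι) (p 0) := by
  induction r using Nat.strong_induction_on generalizing p with
  | _ r ih =>
    rcases le_or_gt r (Fintype.card ι) with hr | hr
    · exact walkWeight_le_bellman_of_le hp hr
    obtain ⟨r', hr', q, hq, hq0, hle⟩ := exists_shorter_walk_weight_ge hC hp hr
    exact hle.trans (hq0 ▸ ih r' hr' hq)

lemma arc_add_bellman_card_le [Fintype ι] (hC : ClosedWalksNonpos M) (i j : ι) :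
    M i j + bellman M (Fintype.card ι) j ≤ bellman M (Fintype.card ι) i := by
  obtain ⟨r, -, p, hp, hp0, heq⟩ := exists_walkWeight_eq_bellman (M := M) (Fintype.card ι + 1) i
  calc M i j + bellman M (Fintype.card ι) j
      ≤ bellman M (Fintype.card ι + 1) i :=
        (le_iSup (fun j => M i j + bellman M _ j) j).trans (le_max_right _ _)
    _ = walkWeight M r p := heq
    _ ≤ bellman M (Fintype.card ι) i := hp0 ▸ walkWeight_le_bellman hC hp

lemma closedWalksNonpos_of_noPosCircuit {n : ℕ} {M : Matrix (Fin n) (Fin n) EReal}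
    (h : NoPosCircuit M) : ClosedWalksNonpos M := by
  intro r p hp hcirc
  have hweight : pathWeight M (r + 1) (fun t => p t) = walkWeight M (r + 1) p := by
    rw [pathWeight, walkWeight, ← Fin.sum_univ_eq_sum_range]
    rfl
  rw [← hweight]
  exact h (r + 1) r.succ_pos _ (fun t => hp t t.isLt) hcirc

end MaxPlus

open MaxPlus

/-- there is a finite potential `x ∈ ℝⁿ` with `M ⊗ x ⪯ x` iff the
precedence graph `G(M)` has no circuit of positive weight. -/
theorem finite_potential_iff_noPosCircuit {n : ℕ} (M : Matrix (Fin n) (Fin n) EReal)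
    (hM : ∀ a b, M a b ≠ ⊤) :
    (∃ x : Fin n → ℝ, ∀ i, mpVec M x i ≤ (x i : EReal)) ↔ NoPosCircuit M := by
  refine ⟨fun ⟨x, hx⟩ _ _ _ _ hcirc => pathWeight_nonpos_of_potential hx hcirc, fun h => ?_⟩
  have hC := closedWalksNonpos_of_noPosCircuit h
  have hx : ∀ i, ((bellman M n i).toReal : EReal) = bellman M n i := fun i =>
    EReal.coe_toReal (bellman_lt_top hM n i).ne
      ((bellman_nonneg n i).trans_lt' EReal.bot_lt_zero).ne'
  refine ⟨fun i => (bellman M n i).toReal, fun i => iSup_le fun j => ?_⟩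
  simpa only [hx, Fintype.card_fin] using arc_add_bellman_card_le hC i j
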